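/- arXiv:1304.4623 — 2 statements merged into one kernel-verified Lean document; each statement's English description precedes it below -/
import Mathlib

section
/- Let $p \ge 1$ be an integer and let $((X_{(l)}, Y_{(l)}))_{l \ge 1}$ be an i.i.d. sequence of pairs of real random variables (within one pair, $X_{(l)}$ and $Y_{(l)}$ may be dependent) with $E[X_{(1)}] = E[Y_{(1)}] = 0$, $E[|X_{(1)}|^{4p}] < \infty$ and $E[|Y_{(1)}|^{4p}] < \infty$. Then there exists a constant $C$, depending only on $p$, $E[|X_{(1)}|^{4p}]$ and $E[|Y_{(1)}|^{4p}]$ (in particular independent of the mesh, of $n$ and of $k$), such that for every mesh $\mathcal{D} = \{0 = t_0 < t_1 < \cdots < t_n = 1\}$ and every $1 \le k \le n$, writing $X_l = \sqrt{\Delta t_l}\,X_{(l)}$ and $Y_l = \sqrt{\Delta t_l}\,Y_{(l)}$, one has $E\big[\big|\sum_{1 \le l_1 < l_2 \le k} X_{l_1} Y_{l_2}\big|^{2p}\big] \le C\, t_k^{2p}$. -/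
/-!
Put `A_k = ∑_{l ≤ k} √Δt_l X_(l)` and let `S_k` be the cross sum, so that
`A_{k+1} = A_k + √Δt_{k+1} X_(k+1)` and `S_{k+1} = S_k + A_k √Δt_{k+1} Y_(k+1)`. Both recursions
have the shape `Z' = Z + W ξ` with `ξ` centred and independent of `(Z, W)`. In the binomial
expansion of `E (Z + W ξ)^(2p)` the term linear in `ξ` vanishes, and every other mixed term
`E |Z|^i |W|^(2p-i)` has `2p - i ≥ 2`; Young's inequality with a small weight on `|Z|^(2p)` bounds
it by a small multiple of `C σ^(2p)` plus a large multiple of `K ρ^(2p)`, where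
`E Z^(2p) ≤ C σ^(2p)` and `E W^(2p) ≤ K ρ^(2p)`. For `C` large this gives
`E Z'^(2p) ≤ C (σ² + ρ²)^p`. Induction over the mesh gives `E A_k^(2p) ≤ C₁ t_k^p` (with
`σ² = t_k`, `ρ² = Δt_{k+1}`), and then `E S_k^(2p) ≤ C t_k^(2p)` (with `σ = t_k`,
`ρ² = t_k Δt_{k+1}`, so that `σ² + ρ² = t_k t_{k+1} ≤ t_{k+1}²`).
-/

open MeasureTheory ProbabilityTheory Finset

theorem pow_mul_pow_le_add_pow {U V δ : ℝ} (hU : 0 ≤ U) (hV : 0 ≤ V) (hδ : 0 < δ) (i j : ℕ) :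
    U ^ i * V ^ j ≤ δ ^ j * U ^ (i + j) + δ⁻¹ ^ i * V ^ (i + j) := by
  rcases le_total V (δ * U) with h | h
  · calc U ^ i * V ^ j ≤ U ^ i * (δ * U) ^ j := by gcongr
      _ = δ ^ j * U ^ (i + j) := by ring
      _ ≤ _ := le_add_of_nonneg_right (by positivity)
  · have hU' : U ≤ δ⁻¹ * V := by rw [inv_mul_eq_div, le_div_iff₀ hδ]; linarith
    calc U ^ i * V ^ j ≤ (δ⁻¹ * V) ^ i * V ^ j := by gcongr
      _ = δ⁻¹ ^ i * V ^ (i + j) := by ring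
      _ ≤ _ := le_add_of_nonneg_left (by positivity)

theorem pow_mul_pow_le_sq_add_sq_pow {σ ρ : ℝ} (hσ : 0 ≤ σ) (hρ : 0 ≤ ρ) {a b q : ℕ}
    (hab : a + b = 2 * q) : σ ^ a * ρ ^ b ≤ (σ ^ 2 + ρ ^ 2) ^ q := by
  have hM : max σ ρ ^ 2 ≤ σ ^ 2 + ρ ^ 2 := by
    rcases max_cases σ ρ with ⟨h, -⟩ | ⟨h, -⟩ <;> rw [h] <;> nlinarith
  calc σ ^ a * ρ ^ b ≤ max σ ρ ^ a * max σ ρ ^ b := by gcongr <;> simp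
    _ = (max σ ρ ^ 2) ^ q := by rw [← pow_add, hab, pow_mul]
    _ ≤ _ := by gcongr

theorem pow_add_sq_add_sq_pow_mul_le {σ ρ : ℝ} (hσ : 0 ≤ σ) (hρ : 0 ≤ ρ) {p : ℕ} (hp : 0 < p) :
    σ ^ (2 * p) + (σ ^ 2 + ρ ^ 2) ^ (p - 1) * ρ ^ 2 ≤ (σ ^ 2 + ρ ^ 2) ^ p := by
  have h : σ ^ (2 * (p - 1)) ≤ (σ ^ 2 + ρ ^ 2) ^ (p - 1) := by
    simpa using pow_mul_pow_le_sq_add_sq_pow hσ hρ (b := 0) rfl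
  calc σ ^ (2 * p) + (σ ^ 2 + ρ ^ 2) ^ (p - 1) * ρ ^ 2
      = σ ^ (2 * (p - 1)) * σ ^ 2 + (σ ^ 2 + ρ ^ 2) ^ (p - 1) * ρ ^ 2 := by
        rw [← pow_add]; congr 2; omega
    _ ≤ (σ ^ 2 + ρ ^ 2) ^ (p - 1) * σ ^ 2 + (σ ^ 2 + ρ ^ 2) ^ (p - 1) * ρ ^ 2 := by gcongr
    _ = (σ ^ 2 + ρ ^ 2) ^ p := by rw [← mul_add, ← pow_succ, Nat.sub_add_cancel hp]

/-- Young's inequality is used with weight `δ = (2 * 4 ^ p * B)⁻¹`; any `C` above this threshold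
absorbs the at most `4 ^ p` lower-order binomial terms (`four_pow_mul_le_of_momentStepConst_le`). -/
def momentStepConst (B K : ℝ) (p : ℕ) : ℝ := (2 * 4 ^ p * B) ^ (2 * p - 1) * K

theorem four_pow_mul_le_of_momentStepConst_le {B K C : ℝ} {p : ℕ} (hp : 0 < p) (hB : 1 ≤ B)
    (hK : 0 ≤ K) (hC : momentStepConst B K p ≤ C) :
    4 ^ p * B * ((2 * 4 ^ p * B)⁻¹ ^ 2 * C + (2 * 4 ^ p * B) ^ (2 * p - 2) * K) ≤ C := by
  set L : ℝ := 2 * 4 ^ p * B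
  have hL : 1 ≤ L := by
    have : (1 : ℝ) ≤ 4 ^ p := one_le_pow₀ (by norm_num)
    nlinarith
  have hC0 : 0 ≤ C := le_trans (by unfold momentStepConst; positivity) hC
  have hLK : L * (L ^ (2 * p - 2) * K) ≤ C := by
    rw [← mul_assoc, ← pow_succ', show 2 * p - 2 + 1 = 2 * p - 1 by omega]; exact hC
  have h4 : 4 ^ p * B = L / 2 := by ring
  rw [h4, mul_add]
  have h1 : L / 2 * (L⁻¹ ^ 2 * C) ≤ C / 2 := by
    rw [show L / 2 * (L⁻¹ ^ 2 * C) = L⁻¹ * (C / 2) by field_simp]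
    exact mul_le_of_le_one_left (by positivity) (inv_le_one_of_one_le₀ hL)
  linarith

def weightedSum (d x : ℕ → ℝ) (k : ℕ) : ℝ := ∑ l ∈ Icc 1 k, d l * x l

def iteratedSum (d x y : ℕ → ℝ) (k : ℕ) : ℝ :=
  ∑ l₂ ∈ Icc 1 k, ∑ l₁ ∈ Ico 1 l₂, (d l₁ * x l₁) * (d l₂ * y l₂)

section sums

variable (d x y : ℕ → ℝ) (k : ℕ)

theorem weightedSum_one : weightedSum d x 1 = d 1 * x 1 := by simp [weightedSum]

theorem weightedSum_succ : weightedSum d x (k + 1) = weightedSum d x k + d (k + 1) * x (k + 1) :=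
  sum_Icc_succ_top (by omega) _

theorem iteratedSum_one : iteratedSum d x y 1 = 0 := by simp [iteratedSum]

theorem iteratedSum_succ :
    iteratedSum d x y (k + 1) =
      iteratedSum d x y k + weightedSum d x k * (d (k + 1) * y (k + 1)) := by
  rw [iteratedSum, sum_Icc_succ_top (by omega), Ico_add_one_right_eq_Icc, ← sum_mul]; rfl

theorem dependsOn_weightedSum :
    DependsOn (fun x => weightedSum d x k) (Icc 1 k : Finset ℕ) :=
  fun x x' h => sum_congr rfl fun l hl => by rw [h l hl]

theorem dependsOn_iteratedSum :
    DependsOn (fun z : ℕ → ℝ × ℝ => iteratedSum d (fun l => (z l).1) (fun l => (z l).2) k)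
      (Icc 1 k : Finset ℕ) := fun z z' h => by
  refine sum_congr rfl fun l₂ hl₂ => sum_congr rfl fun l₁ hl₁ => ?_
  have hl₁' : l₁ ∈ Icc 1 k := by simp at hl₁ hl₂ ⊢; omega
  simp only [h l₁ hl₁', h l₂ hl₂]

end sums

noncomputable def sqrtIncrement (t : ℕ → ℝ) (l : ℕ) : ℝ := √(t l - t (l - 1))

theorem sq_sqrtIncrement_succ {t : ℕ → ℝ} {k : ℕ} (h : t k ≤ t (k + 1)) :
    sqrtIncrement t (k + 1) ^ 2 = t (k + 1) - t k :=
  Real.sq_sqrt (sub_nonneg.2 h)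

theorem pos_of_zero_of_lt_succ {t : ℕ → ℝ} {n : ℕ} (ht0 : t 0 = 0)
    (ht : ∀ i < n, t i < t (i + 1)) : ∀ k ∈ Icc 1 n, 0 < t k := by
  intro k hk
  obtain ⟨hk₁, hkn⟩ := mem_Icc.1 hk
  induction k, hk₁ using Nat.le_induction with
  | base => simpa [ht0] using ht 0 (by omega)
  | succ k hk₁ ih => exact (ih (mem_Icc.2 ⟨hk₁, by omega⟩) (by omega)).trans (ht k (by omega))

section

variable {Ω : Type*} {mΩ : MeasurableSpace Ω} {P : Measure Ω}

theorem ProbabilityTheory.iIndepFun.indepFun_comp_of_dependsOn {ι β γ : Type*} [DecidableEq ι]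
    [MeasurableSpace β] [MeasurableSpace γ] [Inhabited β] {V : ι → Ω → β} (hV : iIndepFun V P)
    (hmeas : ∀ i, Measurable (V i)) {F : (ι → β) → γ} (hF : Measurable F) {s : Finset ι}
    (hFs : DependsOn F s) {i : ι} (hi : i ∉ s) :
    IndepFun (fun ω => F (fun j => V j ω)) (V i) P := by
  have hφ : Measurable fun y : s → β => F (Function.updateFinset default s y) :=
    hF.comp measurable_updateFinset
  convert (hV.indepFun_finset s {i} (disjoint_singleton_right.2 hi) hmeas).comp hφ
    (measurable_pi_apply ⟨i, mem_singleton_self i⟩) using 1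
  · ext ω
    exact hFs fun j hj => by simp [Function.updateFinset, mem_coe.1 hj]
  · rfl

theorem integrable_pow_mul_pow {Z W : Ω → ℝ} (hZ : AEStronglyMeasurable Z P)
    (hW : AEStronglyMeasurable W P) {i j : ℕ} (hZm : Integrable (fun ω => |Z ω| ^ (i + j)) P)
    (hWm : Integrable (fun ω => |W ω| ^ (i + j)) P) :
    Integrable (fun ω => Z ω ^ i * W ω ^ j) P := by
  refine (hZm.add hWm).mono' ((hZ.pow i).mul (hW.pow j)) (ae_of_all _ fun ω => ?_)
  simpa [abs_mul, abs_pow] using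
    pow_mul_pow_le_add_pow (abs_nonneg (Z ω)) (abs_nonneg (W ω)) one_pos i j

theorem integral_abs_pow_mul_abs_pow_le {Z W : Ω → ℝ} {p i j : ℕ} (hij : i + j = 2 * p)
    {a b σ ρ δ : ℝ} (hσ : 0 < σ) (hρ : 0 < ρ) (hδ : 0 < δ)
    (hZ : Integrable (fun ω => Z ω ^ (2 * p)) P) (hW : Integrable (fun ω => W ω ^ (2 * p)) P)
    (hZa : ∫ ω, Z ω ^ (2 * p) ∂P ≤ a * σ ^ (2 * p))
    (hWb : ∫ ω, W ω ^ (2 * p) ∂P ≤ b * ρ ^ (2 * p)) :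
    ∫ ω, |Z ω| ^ i * |W ω| ^ j ∂P ≤ (δ ^ j * a + δ⁻¹ ^ i * b) * (σ ^ i * ρ ^ j) := by
  set c₁ := δ ^ j / σ ^ (2 * p)
  set c₂ := δ⁻¹ ^ i / ρ ^ (2 * p)
  have hpt : ∀ ω, |Z ω| ^ i * |W ω| ^ j
      ≤ σ ^ i * ρ ^ j * (c₁ * Z ω ^ (2 * p) + c₂ * W ω ^ (2 * p)) := fun ω => by
    have h := pow_mul_pow_le_add_pow (div_nonneg (abs_nonneg (Z ω)) hσ.le)
      (div_nonneg (abs_nonneg (W ω)) hρ.le) hδ i j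
    rw [hij, div_pow, div_pow, div_pow, div_pow, (even_two_mul p).pow_abs,
      (even_two_mul p).pow_abs] at h
    calc |Z ω| ^ i * |W ω| ^ j = σ ^ i * ρ ^ j * (|Z ω| ^ i / σ ^ i * (|W ω| ^ j / ρ ^ j)) := by
          field_simp
      _ ≤ σ ^ i * ρ ^ j * (δ ^ j * (Z ω ^ (2 * p) / σ ^ (2 * p))
            + δ⁻¹ ^ i * (W ω ^ (2 * p) / ρ ^ (2 * p))) := by gcongr
      _ = _ := by ring
  have hc₁ : 0 ≤ c₁ := by positivity
  have hc₂ : 0 ≤ c₂ := by positivity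
  calc ∫ ω, |Z ω| ^ i * |W ω| ^ j ∂P
      ≤ ∫ ω, σ ^ i * ρ ^ j * (c₁ * Z ω ^ (2 * p) + c₂ * W ω ^ (2 * p)) ∂P :=
        integral_mono_of_nonneg (ae_of_all _ fun ω => by positivity)
          (((hZ.const_mul c₁).add (hW.const_mul c₂)).const_mul _) (ae_of_all _ hpt)
    _ = σ ^ i * ρ ^ j * (c₁ * ∫ ω, Z ω ^ (2 * p) ∂P + c₂ * ∫ ω, W ω ^ (2 * p) ∂P) := by
        rw [integral_const_mul, integral_add (hZ.const_mul c₁) (hW.const_mul c₂),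
          integral_const_mul, integral_const_mul]
    _ ≤ σ ^ i * ρ ^ j * (c₁ * (a * σ ^ (2 * p)) + c₂ * (b * ρ ^ (2 * p))) := by gcongr
    _ = (δ ^ j * a + δ⁻¹ ^ i * b) * (σ ^ i * ρ ^ j) := by
        simp only [c₁, c₂]; field_simp

theorem integral_add_mul_pow_eq {Z W ξ : Ω → ℝ} (hZ : Measurable Z) (hW : Measurable W)
    (hξ : Measurable ξ) (hind : IndepFun (fun ω => (Z ω, W ω)) ξ P) {m : ℕ}
    (hZW : ∀ i ≤ m, Integrable (fun ω => Z ω ^ i * W ω ^ (m - i)) P)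
    (hξm : ∀ j ≤ m, Integrable (fun ω => ξ ω ^ j) P) :
    Integrable (fun ω => (Z ω + W ω * ξ ω) ^ m) P ∧
      ∫ ω, (Z ω + W ω * ξ ω) ^ m ∂P = ∑ i ∈ range (m + 1),
        (∫ ω, Z ω ^ i * W ω ^ (m - i) ∂P) * (∫ ω, ξ ω ^ (m - i) ∂P) * m.choose i := by
  have hexp : (fun ω => (Z ω + W ω * ξ ω) ^ m) = fun ω => ∑ i ∈ range (m + 1),
      Z ω ^ i * W ω ^ (m - i) * ξ ω ^ (m - i) * m.choose i := by
    ext ω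
    rw [add_pow]
    exact sum_congr rfl fun i _ => by ring
  have hindep (i : ℕ) :
      IndepFun (fun ω => Z ω ^ i * W ω ^ (m - i)) (fun ω => ξ ω ^ (m - i)) P :=
    hind.comp (φ := fun x : ℝ × ℝ => x.1 ^ i * x.2 ^ (m - i)) (ψ := fun x : ℝ => x ^ (m - i))
      (by fun_prop) (by fun_prop)
  have hterm : ∀ i ∈ range (m + 1),
      Integrable (fun ω => Z ω ^ i * W ω ^ (m - i) * ξ ω ^ (m - i) * m.choose i) P :=
    fun i hi => ((hindep i).integrable_mul (hZW i (by simpa [Nat.lt_succ_iff] using hi))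
      (hξm _ (Nat.sub_le m i))).mul_const _
  rw [hexp]
  refine ⟨integrable_finsetSum _ hterm, ?_⟩
  rw [integral_finsetSum _ hterm]
  refine sum_congr rfl fun i _ => ?_
  rw [integral_mul_const, (hindep i).integral_fun_mul_eq_mul_integral
    (by fun_prop) (by fun_prop)]

theorem integral_abs_pow_mul_abs_pow_le_of_two_le {Z W : Ω → ℝ} {p i : ℕ} (hi : i + 2 ≤ 2 * p)
    {K C L σ ρ : ℝ} (hσ : 0 < σ) (hρ : 0 < ρ) (hL : 1 ≤ L) (hK : 0 ≤ K) (hC : 0 ≤ C)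
    (hZm : Integrable (fun ω => Z ω ^ (2 * p)) P) (hZC : ∫ ω, Z ω ^ (2 * p) ∂P ≤ C * σ ^ (2 * p))
    (hWm : Integrable (fun ω => W ω ^ (2 * p)) P)
    (hWK : ∫ ω, W ω ^ (2 * p) ∂P ≤ K * ρ ^ (2 * p)) :
    ∫ ω, |Z ω| ^ i * |W ω| ^ (2 * p - i) ∂P
      ≤ (L⁻¹ ^ 2 * C + L ^ (2 * p - 2) * K) * ((σ ^ 2 + ρ ^ 2) ^ (p - 1) * ρ ^ 2) := by
  have hYoung := integral_abs_pow_mul_abs_pow_le (Nat.add_sub_cancel' (by omega : i ≤ 2 * p))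
    hσ hρ (inv_pos.2 (by positivity : (0:ℝ) < L)) hZm hWm hZC hWK
  rw [inv_inv] at hYoung
  have hcoef : L⁻¹ ^ (2 * p - i) * C + L ^ i * K ≤ L⁻¹ ^ 2 * C + L ^ (2 * p - 2) * K := by
    have h₁ : L⁻¹ ^ (2 * p - i) ≤ L⁻¹ ^ 2 :=
      pow_le_pow_of_le_one (by positivity) (inv_le_one_of_one_le₀ hL) (by omega)
    have h₂ : L ^ i ≤ L ^ (2 * p - 2) := pow_le_pow_right₀ hL (by omega)
    gcongr
  have hσρ : σ ^ i * ρ ^ (2 * p - i) ≤ (σ ^ 2 + ρ ^ 2) ^ (p - 1) * ρ ^ 2 :=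
    calc σ ^ i * ρ ^ (2 * p - i) = σ ^ i * ρ ^ (2 * p - i - 2) * ρ ^ 2 := by
          rw [mul_assoc, ← pow_add, Nat.sub_add_cancel (by omega)]
      _ ≤ _ := mul_le_mul_of_nonneg_right
          (pow_mul_pow_le_sq_add_sq_pow hσ.le hρ.le (by omega)) (by positivity)
  exact hYoung.trans (mul_le_mul hcoef hσρ (by positivity) (by positivity))

variable [IsProbabilityMeasure P]

theorem ProbabilityTheory.IdentDistrib.integrable_pow_and_abs_integral_le {f g : Ω → ℝ}
    (h : IdentDistrib f g P P) {n j : ℕ} (hj : j ≤ n)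
    (hg : Integrable (fun ω => |g ω| ^ n) P) :
    Integrable (fun ω => f ω ^ j) P ∧ |∫ ω, f ω ^ j ∂P| ≤ 1 + ∫ ω, |g ω| ^ n ∂P := by
  have hdom : ∀ ω, ‖g ω ^ j‖ ≤ 1 + |g ω| ^ n := fun ω => by
    simpa [abs_pow, add_comm, Nat.add_sub_cancel' hj] using
      pow_mul_pow_le_add_pow (abs_nonneg (g ω)) zero_le_one one_pos j (n - j)
  have hgj : Integrable (fun ω => g ω ^ j) P :=
    ((integrable_const 1).add hg).mono' (h.aemeasurable_snd.pow_const j).aestronglyMeasurable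
      (ae_of_all _ hdom)
  have hfg : IdentDistrib (fun ω => f ω ^ j) (fun ω => g ω ^ j) P P :=
    h.comp (measurable_id.pow_const j)
  refine ⟨hfg.integrable_iff.2 hgj, ?_⟩
  rw [hfg.integral_eq]
  calc |∫ ω, g ω ^ j ∂P| ≤ ∫ ω, ‖g ω ^ j‖ ∂P := abs_integral_le_integral_abs.trans_eq rfl
    _ ≤ ∫ ω, (1 + |g ω| ^ n) ∂P := integral_mono hgj.norm ((integrable_const 1).add hg) hdom
    _ = 1 + ∫ ω, |g ω| ^ n ∂P := by simp [integral_add (integrable_const 1) hg]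

theorem integral_add_mul_pow_le_add_sum {p : ℕ} (hp : 0 < p) {B : ℝ} {Z W ξ : Ω → ℝ}
    (hZ : Measurable Z) (hW : Measurable W) (hξ : Measurable ξ)
    (hind : IndepFun (fun ω => (Z ω, W ω)) ξ P)
    (hξm : ∀ j ≤ 2 * p, Integrable (fun ω => ξ ω ^ j) P ∧ |∫ ω, ξ ω ^ j ∂P| ≤ B)
    (hξ0 : ∫ ω, ξ ω ∂P = 0) (hZm : Integrable (fun ω => Z ω ^ (2 * p)) P)
    (hWm : Integrable (fun ω => W ω ^ (2 * p)) P) :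
    Integrable (fun ω => (Z ω + W ω * ξ ω) ^ (2 * p)) P ∧
      ∫ ω, (Z ω + W ω * ξ ω) ^ (2 * p) ∂P ≤ ∫ ω, Z ω ^ (2 * p) ∂P +
        B * ∑ i ∈ range (2 * p - 1),
          (2 * p).choose i * ∫ ω, |Z ω| ^ i * |W ω| ^ (2 * p - i) ∂P := by
  set m := 2 * p
  have hmev : Even m := even_two_mul p
  have hZW : ∀ i ≤ m, Integrable (fun ω => Z ω ^ i * W ω ^ (m - i)) P := fun i hi => by
    refine integrable_pow_mul_pow hZ.aestronglyMeasurable hW.aestronglyMeasurable ?_ ?_ <;>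
      simpa only [Nat.add_sub_cancel' hi, hmev.pow_abs]
  obtain ⟨hint, heq⟩ := integral_add_mul_pow_eq hZ hW hξ hind hZW fun j hj => (hξm j hj).1
  refine ⟨hint, ?_⟩
  have hterm : ∀ i ∈ range (m - 1),
      (∫ ω, Z ω ^ i * W ω ^ (m - i) ∂P) * (∫ ω, ξ ω ^ (m - i) ∂P) * m.choose i
        ≤ B * (m.choose i * ∫ ω, |Z ω| ^ i * |W ω| ^ (m - i) ∂P) := fun i _ => by
    have hZW' : |∫ ω, Z ω ^ i * W ω ^ (m - i) ∂P| ≤ ∫ ω, |Z ω| ^ i * |W ω| ^ (m - i) ∂P :=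
      abs_integral_le_integral_abs.trans_eq (by simp only [abs_mul, abs_pow])
    calc (∫ ω, Z ω ^ i * W ω ^ (m - i) ∂P) * (∫ ω, ξ ω ^ (m - i) ∂P) * m.choose i
        ≤ |∫ ω, Z ω ^ i * W ω ^ (m - i) ∂P| * |∫ ω, ξ ω ^ (m - i) ∂P| * m.choose i := by
          rw [← abs_mul]; gcongr; exact le_abs_self _
      _ ≤ (∫ ω, |Z ω| ^ i * |W ω| ^ (m - i) ∂P) * B * m.choose i := by
          gcongr
          exact (hξm _ (Nat.sub_le m i)).2
      _ = B * (m.choose i * ∫ ω, |Z ω| ^ i * |W ω| ^ (m - i) ∂P) := by ring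
  rw [heq, show m + 1 = m - 1 + 1 + 1 by omega, sum_range_succ, sum_range_succ,
    show m - (m - 1) = 1 by omega, show m - 1 + 1 = m by omega, Nat.sub_self, mul_sum]
  simp only [pow_one, hξ0, mul_zero, zero_mul, add_zero, pow_zero, mul_one, integral_const,
    probReal_univ, smul_eq_mul, Nat.choose_self, Nat.cast_one]
  linarith [sum_le_sum hterm]

theorem integral_add_mul_pow_le {p : ℕ} (hp : 0 < p) {B K C σ ρ τ : ℝ} (hσ : 0 < σ)
    (hρ : 0 < ρ) (hτ : σ ^ 2 + ρ ^ 2 ≤ τ) (hC : momentStepConst B K p ≤ C) {Z W ξ : Ω → ℝ}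
    (hZ : Measurable Z) (hW : Measurable W) (hξ : Measurable ξ)
    (hind : IndepFun (fun ω => (Z ω, W ω)) ξ P)
    (hξm : ∀ j ≤ 2 * p, Integrable (fun ω => ξ ω ^ j) P ∧ |∫ ω, ξ ω ^ j ∂P| ≤ B)
    (hξ0 : ∫ ω, ξ ω ∂P = 0) (hZm : Integrable (fun ω => Z ω ^ (2 * p)) P)
    (hZC : ∫ ω, Z ω ^ (2 * p) ∂P ≤ C * σ ^ (2 * p)) (hWm : Integrable (fun ω => W ω ^ (2 * p)) P)
    (hWK : ∫ ω, W ω ^ (2 * p) ∂P ≤ K * ρ ^ (2 * p)) :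
    Integrable (fun ω => (Z ω + W ω * ξ ω) ^ (2 * p)) P ∧
      ∫ ω, (Z ω + W ω * ξ ω) ^ (2 * p) ∂P ≤ C * τ ^ p := by
  set L : ℝ := 2 * 4 ^ p * B
  set E : ℝ := (σ ^ 2 + ρ ^ 2) ^ (p - 1) * ρ ^ 2
  have hB : 1 ≤ B := by simpa using (hξm 0 (Nat.zero_le _)).2
  have hK : 0 ≤ K := nonneg_of_mul_nonneg_left
    ((integral_nonneg fun ω => (even_two_mul p).pow_nonneg (W ω)).trans hWK) (by positivity)
  have hL : 1 ≤ L := by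
    have : (1 : ℝ) ≤ 4 ^ p := one_le_pow₀ (by norm_num)
    nlinarith
  have hC₀ : 0 ≤ C := le_trans (by unfold momentStepConst; positivity) hC
  have hchoose : ∑ i ∈ range (2 * p - 1), ((2 * p).choose i : ℝ) ≤ 4 ^ p := by
    have h : ∑ i ∈ range (2 * p - 1), (2 * p).choose i
        ≤ ∑ i ∈ range (2 * p + 1), (2 * p).choose i :=
      sum_le_sum_of_subset (range_subset_range.2 (by omega))
    rw [Nat.sum_range_choose, pow_mul] at h
    exact_mod_cast h
  have hsum : ∑ i ∈ range (2 * p - 1), (2 * p).choose i * ∫ ω, |Z ω| ^ i * |W ω| ^ (2 * p - i) ∂P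
      ≤ 4 ^ p * ((L⁻¹ ^ 2 * C + L ^ (2 * p - 2) * K) * E) := by
    calc _ ≤ ∑ i ∈ range (2 * p - 1),
          (2 * p).choose i * ((L⁻¹ ^ 2 * C + L ^ (2 * p - 2) * K) * E) :=
          sum_le_sum fun i hi => mul_le_mul_of_nonneg_left
            (integral_abs_pow_mul_abs_pow_le_of_two_le (by simp at hi; omega) hσ hρ hL hK hC₀
              hZm hZC hWm hWK) (Nat.cast_nonneg _)
      _ ≤ _ := by rw [← sum_mul]; exact mul_le_mul_of_nonneg_right hchoose (by positivity)
  have hstep : 4 ^ p * B * (L⁻¹ ^ 2 * C + L ^ (2 * p - 2) * K) ≤ C :=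
    four_pow_mul_le_of_momentStepConst_le hp hB hK hC
  have hgap : σ ^ (2 * p) + E ≤ τ ^ p :=
    (pow_add_sq_add_sq_pow_mul_le hσ.le hρ.le hp).trans (by gcongr)
  obtain ⟨hint, hle⟩ := integral_add_mul_pow_le_add_sum hp hZ hW hξ hind hξm hξ0 hZm hWm
  refine ⟨hint, hle.trans ?_⟩
  calc _ ≤ C * σ ^ (2 * p) + B * (4 ^ p * ((L⁻¹ ^ 2 * C + L ^ (2 * p - 2) * K) * E)) := by
        gcongr
    _ = C * σ ^ (2 * p) + 4 ^ p * B * (L⁻¹ ^ 2 * C + L ^ (2 * p - 2) * K) * E := by ring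
    _ ≤ C * σ ^ (2 * p) + C * E := by gcongr
    _ ≤ C * τ ^ p := by rw [← mul_add]; gcongr

theorem integral_pow_le_of_recursion {p n : ℕ} (hp : 0 < p) {B K C : ℝ}
    (hC : momentStepConst B K p ≤ C) {Z W ξ : ℕ → Ω → ℝ} {σ ρ : ℕ → ℝ}
    (hZ : ∀ k, Measurable (Z k)) (hW : ∀ k, Measurable (W k)) (hξ : ∀ k, Measurable (ξ k))
    (hrec : ∀ k ω, Z (k + 1) ω = Z k ω + W k ω * ξ (k + 1) ω)
    (hind : ∀ k, IndepFun (fun ω => (Z k ω, W k ω)) (ξ (k + 1)) P)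
    (hξm : ∀ k, ∀ j ≤ 2 * p, Integrable (fun ω => ξ k ω ^ j) P ∧ |∫ ω, ξ k ω ^ j ∂P| ≤ B)
    (hξ0 : ∀ k, ∫ ω, ξ k ω ∂P = 0)
    (hσρ : ∀ k ∈ Ico 1 n, 0 < σ k ∧ 0 < ρ k ∧ σ k ^ 2 + ρ k ^ 2 ≤ σ (k + 1) ^ 2)
    (hWK : ∀ k ∈ Ico 1 n, Integrable (fun ω => W k ω ^ (2 * p)) P ∧
      ∫ ω, W k ω ^ (2 * p) ∂P ≤ K * ρ k ^ (2 * p))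
    (h₁ : Integrable (fun ω => Z 1 ω ^ (2 * p)) P ∧
      ∫ ω, Z 1 ω ^ (2 * p) ∂P ≤ C * σ 1 ^ (2 * p)) :
    ∀ k ∈ Icc 1 n, Integrable (fun ω => Z k ω ^ (2 * p)) P ∧
      ∫ ω, Z k ω ^ (2 * p) ∂P ≤ C * σ k ^ (2 * p) := by
  intro k hk
  obtain ⟨hk₁, hkn⟩ := mem_Icc.1 hk
  induction k, hk₁ using Nat.le_induction with
  | base => exact h₁
  | succ k hk₁ ih =>
    have hk : k ∈ Ico 1 n := mem_Ico.2 ⟨hk₁, hkn⟩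
    obtain ⟨hσ, hρ, hτ⟩ := hσρ k hk
    obtain ⟨hZm, hZC⟩ := ih (mem_Icc.2 ⟨hk₁, by omega⟩) (by omega)
    simp only [hrec]
    rw [pow_mul (σ (k + 1))]
    exact integral_add_mul_pow_le hp hσ hρ hτ hC (hZ k) (hW k) (hξ (k + 1)) (hind k)
      (hξm (k + 1)) (hξ0 (k + 1)) hZm hZC (hWK k hk).1 (hWK k hk).2

theorem integral_weightedSum_pow_le {p n : ℕ} (hp : 0 < p) {B C : ℝ} (hB : B ≤ C)
    (hC : momentStepConst B 1 p ≤ C) {X : ℕ → Ω → ℝ} (hX : ∀ l, Measurable (X l))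
    (hind : iIndepFun X P)
    (hXm : ∀ l, ∀ j ≤ 2 * p, Integrable (fun ω => X l ω ^ j) P ∧ |∫ ω, X l ω ^ j ∂P| ≤ B)
    (hX0 : ∀ l, ∫ ω, X l ω ∂P = 0) {t : ℕ → ℝ} (ht0 : t 0 = 0)
    (ht : ∀ i < n, t i < t (i + 1)) :
    ∀ k ∈ Icc 1 n, Integrable (fun ω => weightedSum (sqrtIncrement t) (X · ω) k ^ (2 * p)) P ∧
      ∫ ω, weightedSum (sqrtIncrement t) (X · ω) k ^ (2 * p) ∂P ≤ C * t k ^ p := by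
  set d := sqrtIncrement t
  have htpos := pos_of_zero_of_lt_succ ht0 ht
  intro k hk
  rw [← Real.sq_sqrt (htpos k hk).le, ← pow_mul]
  refine integral_pow_le_of_recursion hp hC (Z := fun k ω => weightedSum d (X · ω) k)
    (W := fun k _ => d (k + 1)) (σ := fun k => √(t k))
    (ρ := fun k => d (k + 1)) (fun k => by unfold weightedSum; fun_prop)
    (fun _ => measurable_const) hX (fun k ω => weightedSum_succ _ _ k) (fun k => ?_) hXm hX0
    (fun k hk => ?_) (fun k hk => ?_) ?_ k hk
  · refine hind.indepFun_comp_of_dependsOn hX (F := fun x => (weightedSum d x k, d (k + 1)))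
      (s := Icc 1 k) (by unfold weightedSum; fun_prop) (fun x x' h => ?_) (by simp)
    simp only [dependsOn_weightedSum d k h]
  · have htk := htpos k (Ico_subset_Icc_self hk)
    have htk' := ht k (mem_Ico.1 hk).2
    refine ⟨Real.sqrt_pos.2 htk, Real.sqrt_pos.2 (sub_pos.2 htk'), ?_⟩
    rw [Real.sq_sqrt htk.le, sq_sqrtIncrement_succ htk'.le, Real.sq_sqrt (htk.trans htk').le]
    linarith
  · exact ⟨integrable_const _, by simp⟩
  · have hd₁ : d 1 = √(t 1) := by simp [d, sqrtIncrement, ht0]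
    simp only [weightedSum_one, mul_pow, integral_const_mul, ← hd₁]
    refine ⟨(hXm 1 _ le_rfl).1.const_mul _, ?_⟩
    have hd : 0 ≤ d 1 ^ (2 * p) := pow_nonneg (Real.sqrt_nonneg _) _
    calc d 1 ^ (2 * p) * ∫ ω, X 1 ω ^ (2 * p) ∂P ≤ d 1 ^ (2 * p) * B :=
          mul_le_mul_of_nonneg_left ((le_abs_self _).trans (hXm 1 _ le_rfl).2) hd
      _ ≤ C * d 1 ^ (2 * p) := by rw [mul_comm]; exact mul_le_mul_of_nonneg_right hB hd

theorem integral_iteratedSum_pow_le {p n : ℕ} (hp : 0 < p) {B C₁ C : ℝ} (hB : B ≤ C₁)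
    (hC₁ : momentStepConst B 1 p ≤ C₁) (hC : momentStepConst B C₁ p ≤ C) {X Y : ℕ → Ω → ℝ}
    (hX : ∀ l, Measurable (X l)) (hY : ∀ l, Measurable (Y l))
    (hind : iIndepFun (fun l ω => (X l ω, Y l ω)) P)
    (hXm : ∀ l, ∀ j ≤ 2 * p, Integrable (fun ω => X l ω ^ j) P ∧ |∫ ω, X l ω ^ j ∂P| ≤ B)
    (hX0 : ∀ l, ∫ ω, X l ω ∂P = 0)
    (hYm : ∀ l, ∀ j ≤ 2 * p, Integrable (fun ω => Y l ω ^ j) P ∧ |∫ ω, Y l ω ^ j ∂P| ≤ B)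
    (hY0 : ∀ l, ∫ ω, Y l ω ∂P = 0) {t : ℕ → ℝ} (ht0 : t 0 = 0)
    (ht : ∀ i < n, t i < t (i + 1)) :
    ∀ k ∈ Icc 1 n,
      Integrable (fun ω => iteratedSum (sqrtIncrement t) (X · ω) (Y · ω) k ^ (2 * p)) P ∧
      ∫ ω, iteratedSum (sqrtIncrement t) (X · ω) (Y · ω) k ^ (2 * p) ∂P ≤ C * t k ^ (2 * p) := by
  set d := sqrtIncrement t
  have htpos := pos_of_zero_of_lt_succ ht0 ht
  have hA := integral_weightedSum_pow_le hp hB hC₁ hX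
    (hind.comp (fun _ => Prod.fst) fun _ => measurable_fst) hXm hX0 ht0 ht
  intro k hk
  refine integral_pow_le_of_recursion hp hC
    (Z := fun k ω => iteratedSum d (X · ω) (Y · ω) k)
    (W := fun k ω => weightedSum d (X · ω) k * d (k + 1)) (σ := t)
    (ρ := fun k => √(t k) * d (k + 1)) (fun k => by unfold iteratedSum; fun_prop)
    (fun k => by unfold weightedSum; fun_prop) hY
    (fun k ω => by rw [iteratedSum_succ, mul_assoc]) (fun k => ?_) hYm hY0
    (fun k hk => ?_) (fun k hk => ?_) ?_ k hk
  · have h := hind.indepFun_comp_of_dependsOn (fun l => (hX l).prodMk (hY l))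
      (s := Icc 1 k) (i := k + 1)
      (F := fun z => (iteratedSum d (fun l => (z l).1) (fun l => (z l).2) k,
        weightedSum d (fun l => (z l).1) k * d (k + 1)))
      (by unfold iteratedSum weightedSum; fun_prop) (fun z z' h => ?_) (by simp)
    · exact h.comp measurable_id measurable_snd
    · simp only [dependsOn_iteratedSum d k h,
        dependsOn_weightedSum d k fun l hl => congrArg Prod.fst (h l hl)]
  · have htk := htpos k (Ico_subset_Icc_self hk)
    have htk' := ht k (mem_Ico.1 hk).2
    refine ⟨htk, mul_pos (Real.sqrt_pos.2 htk) (Real.sqrt_pos.2 (sub_pos.2 htk')), ?_⟩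
    rw [mul_pow, Real.sq_sqrt htk.le, sq_sqrtIncrement_succ htk'.le]
    nlinarith
  · obtain ⟨hAm, hAC⟩ := hA k (Ico_subset_Icc_self hk)
    have hsqrt : √(t k) ^ (2 * p) = t k ^ p := by
      rw [pow_mul, Real.sq_sqrt (htpos k (Ico_subset_Icc_self hk)).le]
    simp only [mul_pow, integral_mul_const, hsqrt]
    refine ⟨hAm.mul_const _, ?_⟩
    rw [← mul_assoc]
    exact mul_le_mul_of_nonneg_right hAC (pow_nonneg (Real.sqrt_nonneg _) _)
  · have hC₀ : 0 ≤ C := by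
      have : 1 ≤ B := by simpa using (hXm 0 0 (Nat.zero_le _)).2
      have : 0 ≤ C₁ := by linarith
      exact le_trans (by unfold momentStepConst; positivity) hC
    simp only [iteratedSum_one, zero_pow (by omega : 2 * p ≠ 0), integral_zero]
    exact ⟨integrable_zero _ _ _, mul_nonneg hC₀ ((even_two_mul p).pow_nonneg _)⟩

end

/-- Second-level cross-term moment estimate: for an i.i.d. sequence of
pairs `(X (l), Y (l))` of centered real random variables with finite `4p`-th moments
`KX`, `KY`, there is a constant `C = C(p, KX, KY)` such that for every mesh
`0 = t 0 < ⋯ < t n = 1` and every `1 ≤ k ≤ n`, writing `X_l = √(Δt_l) X (l)` and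
`Y_l = √(Δt_l) Y (l)`, one has
`E[|∑_{1 ≤ l1 < l2 ≤ k} X_{l1} Y_{l2}|^{2p}] ≤ C t_k^{2p}`. -/
theorem statement_1 (p : ℕ) (hp : 1 ≤ p) (KX KY : ℝ) :
    ∃ C : ℝ, ∀ (Ω : Type) (mΩ : MeasurableSpace Ω) (P : Measure Ω),
      IsProbabilityMeasure P →
      ∀ X Y : ℕ → Ω → ℝ,
        (∀ l, Measurable (X l)) → (∀ l, Measurable (Y l)) →
        iIndepFun
          (fun l ω => (X l ω, Y l ω)) P →
        (∀ l, IdentDistrib (fun ω => (X l ω, Y l ω)) (fun ω => (X 1 ω, Y 1 ω)) P P) →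
        (∫ ω, X 1 ω ∂P) = 0 →
        (∫ ω, Y 1 ω ∂P) = 0 →
        Integrable (fun ω => |X 1 ω| ^ (4 * p)) P →
        Integrable (fun ω => |Y 1 ω| ^ (4 * p)) P →
        (∫ ω, |X 1 ω| ^ (4 * p) ∂P) = KX →
        (∫ ω, |Y 1 ω| ^ (4 * p) ∂P) = KY →
        ∀ (n : ℕ) (t : ℕ → ℝ),
          0 < n → t 0 = 0 → t n = 1 →
          (∀ i, i < n → t i < t (i + 1)) →
          ∀ k, 1 ≤ k → k ≤ n →
            (∫ ω, |∑ l2 ∈ Finset.Icc 1 k, ∑ l1 ∈ Finset.Ico 1 l2,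
                (Real.sqrt (t l1 - t (l1 - 1)) * X l1 ω) *
                  (Real.sqrt (t l2 - t (l2 - 1)) * Y l2 ω)| ^ (2 * p) ∂P)
              ≤ C * t k ^ (2 * p) := by
  set B : ℝ := 1 + |KX| + |KY|
  set C₁ : ℝ := max B (momentStepConst B 1 p)
  refine ⟨momentStepConst B C₁ p, ?_⟩
  intro Ω mΩ P _ X Y hX hY hind hid hX0 hY0 hXint hYint hKX hKY n t _ ht0 _ ht k hk₁ hkn
  have hXl (l : ℕ) : IdentDistrib (X l) (X 1) P P := (hid l).comp measurable_fst
  have hYl (l : ℕ) : IdentDistrib (Y l) (Y 1) P P := (hid l).comp measurable_snd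
  have hXm (l j : ℕ) (hj : j ≤ 2 * p) :
      Integrable (fun ω => X l ω ^ j) P ∧ |∫ ω, X l ω ^ j ∂P| ≤ B :=
    ((hXl l).integrable_pow_and_abs_integral_le (by omega) hXint).imp_right fun h =>
      h.trans (by rw [hKX]; linarith [le_abs_self KX, abs_nonneg KY])
  have hYm (l j : ℕ) (hj : j ≤ 2 * p) :
      Integrable (fun ω => Y l ω ^ j) P ∧ |∫ ω, Y l ω ^ j ∂P| ≤ B :=
    ((hYl l).integrable_pow_and_abs_integral_le (by omega) hYint).imp_right fun h =>
      h.trans (by rw [hKY]; linarith [le_abs_self KY, abs_nonneg KX])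
  simp_rw [(even_two_mul p).pow_abs]
  exact (integral_iteratedSum_pow_le hp (le_max_left _ _) (le_max_right _ _) le_rfl hX hY hind
    hXm (fun l => (hXl l).integral_eq.trans hX0) hYm (fun l => (hYl l).integral_eq.trans hY0)
    ht0 ht k (mem_Icc.2 ⟨hk₁, hkn⟩)).2
end

section
/- Let $h : [0,1] \to \mathbb{R}$ be $L$-Lipschitz with $h(0) = 0$ and $h(1) = 1$, let $\mathcal{D} = \{0 = t_0 < \cdots < t_n = 1\}$ be a mesh, and define $h^{\mathcal{D}}(t) = t_i + \Delta t_{i+1}\, h\big( \frac{t - t_i}{\Delta t_{i+1}} \big)$ for $t \in [t_i, t_{i+1}]$. Then for every $\beta \in (0,1)$ and all $s, t \in [0,1]$ with $s \ne t$, $\big| \big( h^{\mathcal{D}}(t) - t \big) - \big( h^{\mathcal{D}}(s) - s \big) \big| \le 2^{1-\beta} (1 + L)\, |\mathcal{D}|^{1-\beta}\, |t - s|^{\beta}$. In particular, for every sequence of meshes $\mathcal{D}_n$ with $|\mathcal{D}_n| \to 0$, the paths $h^{\mathcal{D}_n}$ converge to the identity map $\mathrm{id}(t) = t$ in $\beta$-Hölder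 norm for every $\beta < 1$. -/
open MeasureTheory Filter

/-!
On a cell `[t_i, t_{i+1}]`, `h^𝒟 - id` is `h - id` rescaled by `Δt_{i+1}` in both variables, so it
is `(1 + L)`-Lipschitz there; adjacent cells share an endpoint, so it is `(1 + L)`-Lipschitz on all
of `[0,1]`. It vanishes at the left end of every cell, hence is bounded by `(1 + L) |𝒟|`. For its
increment `Δ` between `s` and `t` the Hölder bound is the interpolation
`|Δ| = |Δ|^{1-β} |Δ|^β ≤ (2 (1 + L) |𝒟|)^{1-β} ((1 + L) |t - s|)^β`.
-/

open Set
open scoped NNReal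

lemma le_rpow_one_sub_mul_rpow {d a b β : ℝ} (hd : 0 ≤ d) (ha : d ≤ a) (hb : d ≤ b)
    (hβ0 : 0 ≤ β) (hβ1 : β ≤ 1) : d ≤ a ^ (1 - β) * b ^ β :=
  calc d = d ^ (1 - β) * d ^ β := by
        rw [← Real.rpow_add' hd (by norm_num), sub_add_cancel, Real.rpow_one]
    _ ≤ a ^ (1 - β) * b ^ β :=
        mul_le_mul (Real.rpow_le_rpow hd ha (by linarith)) (Real.rpow_le_rpow hd hb hβ0)
          (Real.rpow_nonneg hd _) (Real.rpow_nonneg (hd.trans ha) _)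

lemma exists_lt_mem_Icc_succ {α : Type*} [LinearOrder α] {t : ℕ → α} {n : ℕ} (hn : 0 < n)
    {s : α} (hs : s ∈ Icc (t 0) (t n)) : ∃ i < n, s ∈ Icc (t i) (t (i + 1)) := by
  induction n with
  | zero => exact absurd hn (lt_irrefl 0)
  | succ n ih =>
    rcases Nat.eq_zero_or_pos n with rfl | hn
    · exact ⟨0, Nat.one_pos, hs⟩
    rcases Icc_subset_Icc_union_Icc (b := t n) hs with hs | hs
    · obtain ⟨i, hi, his⟩ := ih hn hs
      exact ⟨i, by omega, his⟩
    · exact ⟨n, n.lt_succ_self, hs⟩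

lemma LipschitzOnWith.congr {α E : Type*} [PseudoEMetricSpace α] [PseudoEMetricSpace E]
    {K : ℝ≥0} {f g : α → E} {s : Set α} (hf : LipschitzOnWith K f s) (hfg : EqOn f g s) :
    LipschitzOnWith K g s :=
  fun x hx y hy => by rw [← hfg hx, ← hfg hy]; exact hf hx hy

lemma LipschitzOnWith.Icc_union_Icc {E : Type*} [PseudoMetricSpace E] {K : ℝ≥0} {f : ℝ → E}
    {a b c : ℝ} (hab : LipschitzOnWith K f (Icc a b)) (hbc : LipschitzOnWith K f (Icc b c)) :
    LipschitzOnWith K f (Icc a c) := by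
  have key : ∀ x ∈ Icc a b, ∀ y ∈ Icc b c, dist (f x) (f y) ≤ K * dist x y := by
    intro x hx y hy
    have hb₁ : b ∈ Icc a b := ⟨hx.1.trans hx.2, le_rfl⟩
    have hb₂ : b ∈ Icc b c := ⟨le_rfl, hy.1.trans hy.2⟩
    calc dist (f x) (f y) ≤ dist (f x) (f b) + dist (f b) (f y) := dist_triangle _ _ _
      _ ≤ K * dist x b + K * dist b y :=
          add_le_add (hab.dist_le_mul x hx b hb₁) (hbc.dist_le_mul b hb₂ y hy)
      _ = K * dist x y := by
          rw [Real.dist_eq, Real.dist_eq, Real.dist_eq, abs_of_nonpos (by linarith [hx.2]),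
            abs_of_nonpos (by linarith [hy.1]), abs_of_nonpos (by linarith [hx.2, hy.1])]
          ring
  refine LipschitzOnWith.of_dist_le_mul fun x hx y hy => ?_
  rcases Icc_subset_Icc_union_Icc (b := b) hx with hx | hx <;>
    rcases Icc_subset_Icc_union_Icc (b := b) hy with hy | hy
  · exact hab.dist_le_mul x hx y hy
  · exact key x hx y hy
  · rw [dist_comm, dist_comm x]; exact key y hy x hx
  · exact hbc.dist_le_mul x hx y hy

lemma LipschitzOnWith.Icc_of_forall_Icc_succ {E : Type*} [PseudoMetricSpace E] {K : ℝ≥0}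
    {f : ℝ → E} {t : ℕ → ℝ} {n : ℕ}
    (hf : ∀ i < n, LipschitzOnWith K f (Icc (t i) (t (i + 1)))) :
    LipschitzOnWith K f (Icc (t 0) (t n)) := by
  induction n with
  | zero =>
    rw [Icc_self]
    intro x hx y hy
    rw [hx, hy, edist_self]
    exact bot_le
  | succ n ih =>
    exact (ih fun i hi => hf i (by omega)).Icc_union_Icc (hf n n.lt_succ_self)

lemma LipschitzOnWith.rescale {L : ℝ≥0} {h : ℝ → ℝ} (hLip : LipschitzOnWith L h (Icc 0 1))
    {a b : ℝ} (hab : a < b) :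
    LipschitzOnWith L (fun s => a + (b - a) * h ((s - a) / (b - a))) (Icc a b) := by
  have hΔ : 0 < b - a := sub_pos.mpr hab
  have hmaps : MapsTo (fun s => (s - a) / (b - a)) (Icc a b) (Icc 0 1) := fun s hs =>
    ⟨div_nonneg (by linarith [hs.1]) hΔ.le, (div_le_one hΔ).mpr (by linarith [hs.2])⟩
  refine LipschitzOnWith.of_dist_le_mul fun x hx y hy => ?_
  have hxy := hLip.dist_le_mul _ (hmaps hx) _ (hmaps hy)
  beta_reduce at hxy
  rw [Real.dist_eq, Real.dist_eq, ← sub_div, sub_sub_sub_cancel_right, abs_div,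
    abs_of_pos hΔ] at hxy
  rw [Real.dist_eq, Real.dist_eq, add_sub_add_left_eq_sub, ← mul_sub, abs_mul, abs_of_pos hΔ]
  calc (b - a) * |h ((x - a) / (b - a)) - h ((y - a) / (b - a))|
      ≤ (b - a) * (L * (|x - y| / (b - a))) := mul_le_mul_of_nonneg_left hxy hΔ.le
    _ = L * |x - y| := by field_simp

lemma LipschitzOnWith.abs_sub_le_rpow_of_abs_le {α : Type*} [PseudoMetricSpace α] {K : ℝ≥0}
    {f : α → ℝ} {S : Set α} (hf : LipschitzOnWith K f S) {M : ℝ} (hM : 0 ≤ M)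
    (hbound : ∀ x ∈ S, |f x| ≤ K * M) {β : ℝ} (hβ0 : 0 ≤ β) (hβ1 : β ≤ 1) {x y : α}
    (hx : x ∈ S) (hy : y ∈ S) :
    |f x - f y| ≤ 2 ^ (1 - β) * K * M ^ (1 - β) * dist x y ^ β := by
  have hsup : |f x - f y| ≤ 2 * K * M := by
    linarith [abs_sub (f x) (f y), hbound x hx, hbound y hy]
  have hlip : |f x - f y| ≤ K * dist x y := by
    simpa [Real.dist_eq] using hf.dist_le_mul x hx y hy
  have hK : (K : ℝ) ^ (1 - β) * (K : ℝ) ^ β = K := by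
    rw [← Real.rpow_add' K.coe_nonneg (by norm_num), sub_add_cancel, Real.rpow_one]
  calc |f x - f y| ≤ (2 * K * M) ^ (1 - β) * (K * dist x y) ^ β :=
        le_rpow_one_sub_mul_rpow (abs_nonneg _) hsup hlip hβ0 hβ1
    _ = 2 ^ (1 - β) * ((K : ℝ) ^ (1 - β) * (K : ℝ) ^ β) * M ^ (1 - β) * dist x y ^ β := by
        rw [Real.mul_rpow (by positivity) hM, Real.mul_rpow (by norm_num) K.coe_nonneg,
          Real.mul_rpow K.coe_nonneg dist_nonneg]
        ring
    _ = 2 ^ (1 - β) * K * M ^ (1 - β) * dist x y ^ β := by rw [hK]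

def IsRescaledConcat (h : ℝ → ℝ) (n : ℕ) (t : ℕ → ℝ) (hD : ℝ → ℝ) : Prop :=
  ∀ i < n, ∀ s ∈ Icc (t i) (t (i + 1)),
    hD s = t i + (t (i + 1) - t i) * h ((s - t i) / (t (i + 1) - t i))

namespace IsRescaledConcat

variable {L : ℝ≥0} {h : ℝ → ℝ} {n : ℕ} {t : ℕ → ℝ} {hD : ℝ → ℝ}

lemma lipschitzOnWith_sub_id_Icc_succ (hLip : LipschitzOnWith L h (Icc 0 1))
    (hDeq : IsRescaledConcat h n t hD) {i : ℕ} (hi : i < n) (hti : t i < t (i + 1)) :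
    LipschitzOnWith (1 + L) (fun s => hD s - s) (Icc (t i) (t (i + 1))) :=
  (((hLip.rescale hti).sub LipschitzWith.id.lipschitzOnWith).congr
    fun s hs => by simp only [hDeq i hi s hs, id]).weaken (add_comm L 1).le

lemma lipschitzOnWith_sub_id (hLip : LipschitzOnWith L h (Icc 0 1))
    (hmono : ∀ i < n, t i < t (i + 1)) (hDeq : IsRescaledConcat h n t hD) :
    LipschitzOnWith (1 + L) (fun s => hD s - s) (Icc (t 0) (t n)) :=
  LipschitzOnWith.Icc_of_forall_Icc_succ fun i hi =>
    hDeq.lipschitzOnWith_sub_id_Icc_succ hLip hi (hmono i hi)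

lemma abs_sub_id_le (hLip : LipschitzOnWith L h (Icc 0 1)) (h0 : h 0 = 0) (hn : 0 < n)
    (hmono : ∀ i < n, t i < t (i + 1)) (hDeq : IsRescaledConcat h n t hD) {M : ℝ}
    (hM : ∀ i < n, t (i + 1) - t i ≤ M) {s : ℝ} (hs : s ∈ Icc (t 0) (t n)) :
    |hD s - s| ≤ (1 + L) * M := by
  obtain ⟨i, hi, hsi⟩ := exists_lt_mem_Icc_succ hn hs
  have hfix : hD (t i) - t i = 0 := by
    simp [hDeq i hi (t i) ⟨le_rfl, (hmono i hi).le⟩, h0]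
  have := (hDeq.lipschitzOnWith_sub_id_Icc_succ hLip hi (hmono i hi)).dist_le_mul s hsi (t i)
    ⟨le_rfl, (hmono i hi).le⟩
  rw [Real.dist_eq, Real.dist_eq, hfix, sub_zero, abs_of_nonneg (sub_nonneg.2 hsi.1)] at this
  calc |hD s - s| ≤ (1 + L) * (s - t i) := by exact_mod_cast this
    _ ≤ (1 + L) * M := by gcongr; linarith [hsi.2, hM i hi]

lemma abs_sub_id_sub_le_rpow (hLip : LipschitzOnWith L h (Icc 0 1)) (h0 : h 0 = 0) (hn : 0 < n)
    (ht0 : t 0 = 0) (htn : t n = 1) (hmono : ∀ i < n, t i < t (i + 1))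
    (hDeq : IsRescaledConcat h n t hD) {M : ℝ} (hM : ∀ k ∈ Finset.Icc 1 n, t k - t (k - 1) ≤ M)
    {β : ℝ} (hβ0 : 0 ≤ β) (hβ1 : β ≤ 1) {s u : ℝ} (hs : s ∈ Icc 0 1) (hu : u ∈ Icc 0 1) :
    |(hD u - u) - (hD s - s)| ≤ 2 ^ (1 - β) * (1 + L) * M ^ (1 - β) * |u - s| ^ β := by
  have hM' : ∀ i < n, t (i + 1) - t i ≤ M := fun i hi => by
    simpa using hM (i + 1) (Finset.mem_Icc.2 ⟨by omega, hi⟩)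
  have hM0 : 0 ≤ M := by linarith [hmono 0 hn, hM' 0 hn]
  rw [← ht0, ← htn] at hs hu
  have hbound : ∀ x ∈ Icc (t 0) (t n), |hD x - x| ≤ ((1 + L : ℝ≥0) : ℝ) * M := fun x hx => by
    exact_mod_cast hDeq.abs_sub_id_le hLip h0 hn hmono hM' hx
  simpa [Real.dist_eq] using (hDeq.lipschitzOnWith_sub_id hLip hmono).abs_sub_le_rpow_of_abs_le
    hM0 hbound hβ0 hβ1 hu hs

end IsRescaledConcat

theorem statement_12_general (L : NNReal) (h : ℝ → ℝ)
    (hLip : LipschitzOnWith L h (Set.Icc 0 1)) (h0 : h 0 = 0) :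
    (∀ (n : ℕ), 0 < n → ∀ t : ℕ → ℝ, t 0 = 0 → t n = 1 →
      (∀ i, i < n → t i < t (i + 1)) →
      ∀ hD : ℝ → ℝ,
        (∀ i, i < n → ∀ s ∈ Set.Icc (t i) (t (i + 1)),
          hD s = t i + (t (i + 1) - t i) * h ((s - t i) / (t (i + 1) - t i))) →
        ∀ M : ℝ, (∀ k ∈ Finset.Icc 1 n, t k - t (k - 1) ≤ M) →
        ∀ β : ℝ, 0 < β → β < 1 →
        ∀ s ∈ Set.Icc (0 : ℝ) 1, ∀ u ∈ Set.Icc (0 : ℝ) 1, s ≠ u →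
          |(hD u - u) - (hD s - s)|
            ≤ (2 : ℝ) ^ (1 - β) * (1 + (L : ℝ)) * M ^ (1 - β) * |u - s| ^ β) ∧
    (∀ (N : ℕ → ℕ) (t : ℕ → ℕ → ℝ),
      (∀ m, 0 < N m) → (∀ m, t m 0 = 0) → (∀ m, t m (N m) = 1) →
      (∀ m i, i < N m → t m i < t m (i + 1)) →
      ∀ hD : ℕ → ℝ → ℝ,
        (∀ m i, i < N m → ∀ s ∈ Set.Icc (t m i) (t m (i + 1)),
          hD m s = t m i + (t m (i + 1) - t m i) * h ((s - t m i) / (t m (i + 1) - t m i))) →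
        ∀ M : ℕ → ℝ, (∀ m, ∀ k ∈ Finset.Icc 1 (N m), t m k - t m (k - 1) ≤ M m) →
          Tendsto M atTop (nhds 0) →
          ∀ β : ℝ, 0 < β → β < 1 →
            ∀ ε : ℝ, 0 < ε → ∃ m₀ : ℕ, ∀ m, m₀ ≤ m →
              ∀ s ∈ Set.Icc (0 : ℝ) 1, ∀ u ∈ Set.Icc (0 : ℝ) 1, s ≠ u →
                |(hD m u - u) - (hD m s - s)| ≤ ε * |u - s| ^ β) := by
  refine ⟨fun n hn t ht0 htn hmono hD hDeq M hM β hβ0 hβ1 s hs u hu _ =>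
    IsRescaledConcat.abs_sub_id_sub_le_rpow hLip h0 hn ht0 htn hmono hDeq hM hβ0.le hβ1.le hs hu,
    fun N t hN ht0 htn hmono hD hDeq M hM hMlim β hβ0 hβ1 ε hε => ?_⟩
  have hC : Tendsto (fun m => 2 ^ (1 - β) * (1 + (L : ℝ)) * M m ^ (1 - β)) atTop (nhds 0) := by
    have hpow := hMlim.rpow_const (p := 1 - β) (Or.inr (by linarith))
    rw [Real.zero_rpow (by linarith)] at hpow
    simpa using hpow.const_mul (2 ^ (1 - β) * (1 + (L : ℝ)))
  obtain ⟨m₀, hm₀⟩ := eventually_atTop.mp (hC.eventually_lt_const hε)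
  refine ⟨m₀, fun m hm s hs u hu _ => ?_⟩
  calc |(hD m u - u) - (hD m s - s)|
      ≤ 2 ^ (1 - β) * (1 + (L : ℝ)) * M m ^ (1 - β) * |u - s| ^ β :=
        IsRescaledConcat.abs_sub_id_sub_le_rpow hLip h0 (hN m) (ht0 m) (htn m) (hmono m) (hDeq m)
          (hM m) hβ0.le hβ1.le hs hu
    _ ≤ ε * |u - s| ^ β := by gcongr; exact (hm₀ m hm).le

/-- Hölder estimate for the rescaled concatenation `h^𝒟` of an
`L`-Lipschitz time-change `h` with `h(0) = 0`, `h(1) = 1`: for every `β ∈ (0,1)` and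
`s ≠ u` in `[0,1]`,
`|(h^𝒟(u) - u) - (h^𝒟(s) - s)| ≤ 2^{1-β} (1+L) M^{1-β} |u - s|^β`, where `M` bounds the
mesh size; consequently, along any sequence of meshes with mesh size tending to `0`, the
paths `h^{𝒟_n}` converge to the identity in `β`-Hölder norm for every `β < 1`. -/
theorem statement_12 (L : NNReal) (h : ℝ → ℝ)
    (hLip : LipschitzOnWith L h (Set.Icc 0 1)) (h0 : h 0 = 0) (h1 : h 1 = 1) :
    (∀ (n : ℕ), 0 < n → ∀ t : ℕ → ℝ, t 0 = 0 → t n = 1 →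
      (∀ i, i < n → t i < t (i + 1)) →
      ∀ hD : ℝ → ℝ,
        (∀ i, i < n → ∀ s ∈ Set.Icc (t i) (t (i + 1)),
          hD s = t i + (t (i + 1) - t i) * h ((s - t i) / (t (i + 1) - t i))) →
        ∀ M : ℝ, (∀ k ∈ Finset.Icc 1 n, t k - t (k - 1) ≤ M) →
        ∀ β : ℝ, 0 < β → β < 1 →
        ∀ s ∈ Set.Icc (0 : ℝ) 1, ∀ u ∈ Set.Icc (0 : ℝ) 1, s ≠ u →
          |(hD u - u) - (hD s - s)|
            ≤ (2 : ℝ) ^ (1 - β) * (1 + (L : ℝ)) * M ^ (1 - β) * |u - s| ^ β) ∧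
    (∀ (N : ℕ → ℕ) (t : ℕ → ℕ → ℝ),
      (∀ m, 0 < N m) → (∀ m, t m 0 = 0) → (∀ m, t m (N m) = 1) →
      (∀ m i, i < N m → t m i < t m (i + 1)) →
      ∀ hD : ℕ → ℝ → ℝ,
        (∀ m i, i < N m → ∀ s ∈ Set.Icc (t m i) (t m (i + 1)),
          hD m s = t m i + (t m (i + 1) - t m i) * h ((s - t m i) / (t m (i + 1) - t m i))) →
        ∀ M : ℕ → ℝ, (∀ m, ∀ k ∈ Finset.Icc 1 (N m), t m k - t m (k - 1) ≤ M m) →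
          Tendsto M atTop (nhds 0) →
          ∀ β : ℝ, 0 < β → β < 1 →
            ∀ ε : ℝ, 0 < ε → ∃ m₀ : ℕ, ∀ m, m₀ ≤ m →
              ∀ s ∈ Set.Icc (0 : ℝ) 1, ∀ u ∈ Set.Icc (0 : ℝ) 1, s ≠ u →
                |(hD m u - u) - (hD m s - s)| ≤ ε * |u - s| ^ β) :=
  statement_12_general L h hLip h0
end
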